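/- (Appendix, case |f| = 1: no quantumness detection) Let ψ₁ be a unit vector in ℂ^d and ψ₂ = c ψ₁ with |c| = 1, and let η₁, η₂ be density matrices with η₁ψ₁ = 0 and η₂ψ₂ = 0. Then there exists ε₀ > 0 such that for all ε₁, ε₂ with 0 < ε₁, ε₂ < ε₀, the matrices ρᵢ = (1 − εᵢ)|ψᵢ⟩⟨ψᵢ| + εᵢηᵢ satisfy tr[{ρ₁,ρ₂}²] ≤ (tr[{ρ₁,ρ₂}])²; i.e., the purity criterion fails to witness non-positivity. -/

import Mathlib

/-!
With `P = |ψ₁⟩⟨ψ₁| = |ψ₂⟩⟨ψ₂|` and `S = {η₁, η₂}`, the conditions `ηᵢψ₁ = 0` make `P` annihilate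
each `ηᵢ` from both sides, so `{ρ₁, ρ₂} = a P + b S` and `{ρ₁, ρ₂}² = a² P + b² S²` with
`a = 2(1 - ε₁)(1 - ε₂)` and `b = ε₁ε₂`; it suffices that `b tr[S²] ≤ 2a tr[S]`.
Writing `η₁ = X*X`, `η₂ = Y*Y` gives `tr[η₁η₂] = ‖XY*‖²`, so `tr[S] ≥ 0` with equality only if
`S = 0`; hence either `S = 0`, or `tr[S] > 0` and the inequality holds once `b` is small.
-/

open Matrix ComplexOrder

noncomputable def pureState {d : ℕ} (ψ : Fin d → ℂ) : Matrix (Fin d) (Fin d) ℂ :=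
  vecMulVec ψ (star ψ)

noncomputable def mixState {d : ℕ} (ψ : Fin d → ℂ) (η : Matrix (Fin d) (Fin d) ℂ)
    (ε : ℝ) : Matrix (Fin d) (Fin d) ℂ :=
  (1 - (ε : ℂ)) • pureState ψ + (ε : ℂ) • η

namespace Matrix

variable {n 𝕜 : Type*} [Fintype n] [RCLike 𝕜] {A B : Matrix n n 𝕜}

lemma PosSemidef.exists_mul_eq_and_trace_mul_eq (hA : A.PosSemidef) (hB : B.PosSemidef) :
    ∃ M X Y : Matrix n n 𝕜, A * B = Xᴴ * M * Y ∧ (A * B).trace = (M * Mᴴ).trace := by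
  classical
  open scoped MatrixOrder in
  obtain ⟨X, rfl⟩ := CStarAlgebra.nonneg_iff_eq_star_mul_self.mp hA.nonneg
  open scoped MatrixOrder in
  obtain ⟨Y, rfl⟩ := CStarAlgebra.nonneg_iff_eq_star_mul_self.mp hB.nonneg
  refine ⟨X * Yᴴ, X, Y, by simp [star_eq_conjTranspose, Matrix.mul_assoc], ?_⟩
  simp only [star_eq_conjTranspose, conjTranspose_mul, conjTranspose_conjTranspose]
  rw [Matrix.mul_assoc, trace_mul_comm]
  simp only [Matrix.mul_assoc]

lemma PosSemidef.trace_mul_nonneg (hA : A.PosSemidef) (hB : B.PosSemidef) :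
    0 ≤ (A * B).trace := by
  obtain ⟨M, -, -, -, h⟩ := hA.exists_mul_eq_and_trace_mul_eq hB
  exact h ▸ (posSemidef_self_mul_conjTranspose M).trace_nonneg

lemma PosSemidef.mul_eq_zero_of_trace_mul_eq_zero (hA : A.PosSemidef) (hB : B.PosSemidef)
    (h : (A * B).trace = 0) : A * B = 0 := by
  obtain ⟨M, X, Y, hAB, htr⟩ := hA.exists_mul_eq_and_trace_mul_eq hB
  rw [htr, trace_mul_conjTranspose_self_eq_zero_iff] at h
  simp [hAB, h]

lemma PosSemidef.trace_anticomm_nonneg (hA : A.PosSemidef) (hB : B.PosSemidef) :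
    0 ≤ (A * B + B * A).trace := by
  rw [trace_add, trace_mul_comm B]
  exact add_nonneg (hA.trace_mul_nonneg hB) (hA.trace_mul_nonneg hB)

lemma PosSemidef.anticomm_eq_zero_of_re_trace_eq_zero (hA : A.PosSemidef) (hB : B.PosSemidef)
    (h : RCLike.re (A * B + B * A).trace = 0) : A * B + B * A = 0 := by
  have him := (RCLike.nonneg_iff.mp (hA.trace_anticomm_nonneg hB)).2
  have htr : (A * B + B * A).trace = 0 := RCLike.ext (by simpa using h) (by simpa using him)
  rw [trace_add, trace_mul_comm B, ← two_mul, mul_eq_zero, or_iff_right two_ne_zero] at htr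
  have hAB := hA.mul_eq_zero_of_trace_mul_eq_zero hB htr
  have hBA : B * A = 0 := by
    simpa [hA.1.eq, hB.1.eq] using congrArg (·ᴴ) hAB
  rw [hAB, hBA, add_zero]

lemma IsHermitian.anticomm (hA : A.IsHermitian) (hB : B.IsHermitian) :
    (A * B + B * A).IsHermitian := by
  simp [IsHermitian, hA.eq, hB.eq, add_comm]

lemma IsHermitian.trace_mul_self_nonneg (hA : A.IsHermitian) : 0 ≤ (A * A).trace := by
  simpa only [hA.eq] using (posSemidef_conjTranspose_mul_self A).trace_nonneg

end Matrix

section Orthogonal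

variable {R A : Type*} [CommRing R] [Ring A] [Algebra R A] {P η₁ η₂ : A}

lemma anticomm_smul_add_smul_of_orthogonal (hP : P * P = P)
    (h₁ : P * η₁ = 0) (h₁' : η₁ * P = 0) (h₂ : P * η₂ = 0) (h₂' : η₂ * P = 0) (a₁ b₁ a₂ b₂ : R) :
    (a₁ • P + b₁ • η₁) * (a₂ • P + b₂ • η₂) + (a₂ • P + b₂ • η₂) * (a₁ • P + b₁ • η₁)
      = (2 * a₁ * a₂) • P + (b₁ * b₂) • (η₁ * η₂ + η₂ * η₁) := by
  simp only [add_mul, mul_add, smul_mul_smul_comm, hP, h₁, h₁', h₂, h₂', smul_zero, add_zero,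
    zero_add]
  module

lemma mul_self_smul_add_smul_anticomm_of_orthogonal (hP : P * P = P)
    (h₁ : P * η₁ = 0) (h₁' : η₁ * P = 0) (h₂ : P * η₂ = 0) (h₂' : η₂ * P = 0) (a b : R) :
    (a • P + b • (η₁ * η₂ + η₂ * η₁)) * (a • P + b • (η₁ * η₂ + η₂ * η₁))
      = a ^ 2 • P + b ^ 2 • ((η₁ * η₂ + η₂ * η₁) * (η₁ * η₂ + η₂ * η₁)) := by
  have hPS : P * (η₁ * η₂ + η₂ * η₁) = 0 := by simp [mul_add, ← mul_assoc, h₁, h₂]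
  have hSP : (η₁ * η₂ + η₂ * η₁) * P = 0 := by simp [add_mul, mul_assoc, h₁', h₂']
  simp only [add_mul, mul_add, smul_mul_smul_comm, hP, hPS, hSP, smul_zero, add_zero, zero_add]
  module

end Orthogonal

section PureState

variable {d : ℕ} {ψ : Fin d → ℂ} {η η₁ η₂ : Matrix (Fin d) (Fin d) ℂ}

lemma pureState_smul_of_norm_eq_one {c : ℂ} (hc : ‖c‖ = 1) (ψ : Fin d → ℂ) :
    pureState (c • ψ) = pureState ψ := by
  have hcc : c * star c = 1 := by
    rw [Complex.star_def, Complex.mul_conj', hc]; norm_num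
  rw [pureState, star_smul, smul_vecMulVec, vecMulVec_smul, smul_smul, hcc, one_smul, pureState]

lemma mixState_smul_of_norm_eq_one {c : ℂ} (hc : ‖c‖ = 1) (ψ : Fin d → ℂ)
    (η : Matrix (Fin d) (Fin d) ℂ) (ε : ℝ) : mixState (c • ψ) η ε = mixState ψ η ε := by
  rw [mixState, pureState_smul_of_norm_eq_one hc, mixState]

lemma pureState_mul_self (hψ : star ψ ⬝ᵥ ψ = 1) : pureState ψ * pureState ψ = pureState ψ := by
  rw [pureState, vecMulVec_mul_vecMulVec, hψ, one_smul]

lemma mul_pureState_eq_zero (h : η *ᵥ ψ = 0) : η * pureState ψ = 0 := by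
  rw [pureState, mul_vecMulVec, h, zero_vecMulVec]

lemma pureState_mul_eq_zero (hη : η.IsHermitian) (h : η *ᵥ ψ = 0) : pureState ψ * η = 0 := by
  rw [pureState, vecMulVec_mul, ← hη.eq, ← star_mulVec, h, star_zero, vecMulVec_zero]

lemma re_trace_ofReal_smul_pureState_add (hψ : star ψ ⬝ᵥ ψ = 1) (x y : ℝ)
    (S : Matrix (Fin d) (Fin d) ℂ) :
    ((x : ℂ) • pureState ψ + (y : ℂ) • S).trace.re = x + y * S.trace.re := by
  simp [pureState, trace_vecMulVec, dotProduct_comm ψ, hψ]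

lemma anticomm_mixState (hψ : star ψ ⬝ᵥ ψ = 1) (hη₁ : η₁.IsHermitian) (hη₂ : η₂.IsHermitian)
    (h₁ : η₁ *ᵥ ψ = 0) (h₂ : η₂ *ᵥ ψ = 0) (ε₁ ε₂ : ℝ) :
    mixState ψ η₁ ε₁ * mixState ψ η₂ ε₂ + mixState ψ η₂ ε₂ * mixState ψ η₁ ε₁
      = ((2 * (1 - ε₁) * (1 - ε₂) : ℝ) : ℂ) • pureState ψ
        + ((ε₁ * ε₂ : ℝ) : ℂ) • (η₁ * η₂ + η₂ * η₁) := by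
  push_cast
  exact anticomm_smul_add_smul_of_orthogonal (pureState_mul_self hψ)
    (pureState_mul_eq_zero hη₁ h₁) (mul_pureState_eq_zero h₁)
    (pureState_mul_eq_zero hη₂ h₂) (mul_pureState_eq_zero h₂) ..

lemma anticomm_mixState_mul_self (hψ : star ψ ⬝ᵥ ψ = 1) (hη₁ : η₁.IsHermitian)
    (hη₂ : η₂.IsHermitian) (h₁ : η₁ *ᵥ ψ = 0) (h₂ : η₂ *ᵥ ψ = 0) (ε₁ ε₂ : ℝ) :
    (mixState ψ η₁ ε₁ * mixState ψ η₂ ε₂ + mixState ψ η₂ ε₂ * mixState ψ η₁ ε₁) *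
        (mixState ψ η₁ ε₁ * mixState ψ η₂ ε₂ + mixState ψ η₂ ε₂ * mixState ψ η₁ ε₁)
      = (((2 * (1 - ε₁) * (1 - ε₂)) ^ 2 : ℝ) : ℂ) • pureState ψ
        + (((ε₁ * ε₂) ^ 2 : ℝ) : ℂ) • ((η₁ * η₂ + η₂ * η₁) * (η₁ * η₂ + η₂ * η₁)) := by
  rw [anticomm_mixState hψ hη₁ hη₂ h₁ h₂, Complex.ofReal_pow, Complex.ofReal_pow]
  exact mul_self_smul_add_smul_anticomm_of_orthogonal (pureState_mul_self hψ)
    (pureState_mul_eq_zero hη₁ h₁) (mul_pureState_eq_zero h₁)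
    (pureState_mul_eq_zero hη₂ h₂) (mul_pureState_eq_zero h₂) ..

end PureState

lemma exists_pos_forall_lt_mul_mul_le (t q : ℝ) (ht : 0 ≤ t) (hq : 0 ≤ q)
    (htq : t = 0 → q = 0) :
    ∃ ε₀ > (0 : ℝ), ∀ ε₁ ε₂ : ℝ, 0 < ε₁ → ε₁ < ε₀ → 0 < ε₂ → ε₂ < ε₀ →
      ε₁ * ε₂ * q ≤ 2 * (2 * (1 - ε₁) * (1 - ε₂)) * t := by
  rcases ht.eq_or_lt with rfl | ht
  · exact ⟨1 / 2, by norm_num, fun ε₁ ε₂ _ _ _ _ => by simp [htq rfl]⟩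
  refine ⟨min (1 / 2) (t / (q + 1)), by positivity, fun ε₁ ε₂ h₁ h₁' h₂ h₂' => ?_⟩
  have h₁t : ε₁ * (q + 1) < t := (lt_div_iff₀ (by positivity)).mp (h₁'.trans_le (min_le_right ..))
  have h₁h : ε₁ < 1 / 2 := h₁'.trans_le (min_le_left ..)
  have h₂h : ε₂ < 1 / 2 := h₂'.trans_le (min_le_left ..)
  have hquarter : 1 / 4 ≤ (1 - ε₁) * (1 - ε₂) := by nlinarith
  calc ε₁ * ε₂ * q ≤ ε₁ * (q + 1) := by nlinarith [mul_nonneg h₁.le hq]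
    _ ≤ t := h₁t.le
    _ ≤ 2 * (2 * (1 - ε₁) * (1 - ε₂)) * t := by nlinarith

lemma sq_add_sq_mul_le_sq_add_mul {a b t q : ℝ} (ht : 0 ≤ t) (hb : 0 ≤ b)
    (h : b * q ≤ 2 * a * t) : a ^ 2 + b ^ 2 * q ≤ (a + b * t) ^ 2 := by
  nlinarith [mul_le_mul_of_nonneg_left h hb, mul_nonneg (mul_nonneg hb hb) (mul_nonneg ht ht)]

theorem purity_criterion_fails_parallel_case_general {d : ℕ} (ψ₁ ψ₂ : Fin d → ℂ)
    (hψ₁ : star ψ₁ ⬝ᵥ ψ₁ = 1) (c : ℂ) (hc : ‖c‖ = 1) (hψ₂ : ψ₂ = c • ψ₁)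
    (η₁ η₂ : Matrix (Fin d) (Fin d) ℂ)
    (hη₁ : η₁.PosSemidef) (hη₁ψ : η₁ *ᵥ ψ₁ = 0)
    (hη₂ : η₂.PosSemidef) (hη₂ψ : η₂ *ᵥ ψ₂ = 0) :
    ∃ ε₀ > (0 : ℝ), ∀ ε₁ ε₂ : ℝ, 0 < ε₁ → ε₁ < ε₀ → 0 < ε₂ → ε₂ < ε₀ →
      ((mixState ψ₁ η₁ ε₁ * mixState ψ₂ η₂ ε₂ +
            mixState ψ₂ η₂ ε₂ * mixState ψ₁ η₁ ε₁) *
          (mixState ψ₁ η₁ ε₁ * mixState ψ₂ η₂ ε₂ +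
            mixState ψ₂ η₂ ε₂ * mixState ψ₁ η₁ ε₁)).trace.re
        ≤ ((mixState ψ₁ η₁ ε₁ * mixState ψ₂ η₂ ε₂ +
            mixState ψ₂ η₂ ε₂ * mixState ψ₁ η₁ ε₁).trace.re) ^ 2 := by
  subst hψ₂
  have hc₀ : c ≠ 0 := norm_ne_zero_iff.mp (by simp [hc])
  have hη₂ψ₁ : η₂ *ᵥ ψ₁ = 0 := by simpa [mulVec_smul, hc₀] using hη₂ψ
  simp only [mixState_smul_of_norm_eq_one hc]
  have htr := (RCLike.nonneg_iff.mp (hη₁.trace_anticomm_nonneg hη₂)).1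
  obtain ⟨ε₀, hε₀, hsmall⟩ := exists_pos_forall_lt_mul_mul_le _ _ htr
    (RCLike.nonneg_iff.mp (hη₁.1.anticomm hη₂.1).trace_mul_self_nonneg).1
    fun h => by simp [hη₁.anticomm_eq_zero_of_re_trace_eq_zero hη₂ h]
  refine ⟨ε₀, hε₀, fun ε₁ ε₂ h₁ h₁' h₂ h₂' => ?_⟩
  rw [anticomm_mixState_mul_self hψ₁ hη₁.1 hη₂.1 hη₁ψ hη₂ψ₁,
    anticomm_mixState hψ₁ hη₁.1 hη₂.1 hη₁ψ hη₂ψ₁, re_trace_ofReal_smul_pureState_add hψ₁,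
    re_trace_ofReal_smul_pureState_add hψ₁]
  exact sq_add_sq_mul_le_sq_add_mul htr (by positivity) (hsmall ε₁ ε₂ h₁ h₁' h₂ h₂')

/-- Appendix, case `|f| = 1`, no quantumness detection: For a unit
vector `ψ₁`, `ψ₂ = c ψ₁` with `|c| = 1`, and density matrices `η₁, η₂` with
`η₁ψ₁ = 0`, `η₂ψ₂ = 0`, there is `ε₀ > 0` such that for all `0 < ε₁, ε₂ < ε₀`, the
states `ρᵢ = (1 − εᵢ)|ψᵢ⟩⟨ψᵢ| + εᵢηᵢ` satisfy `tr[{ρ₁,ρ₂}²] ≤ (tr[{ρ₁,ρ₂}])²`: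
the purity criterion fails to witness non-positivity. -/
theorem purity_criterion_fails_parallel_case {d : ℕ} (ψ₁ ψ₂ : Fin d → ℂ)
    (hψ₁ : star ψ₁ ⬝ᵥ ψ₁ = 1) (c : ℂ) (hc : ‖c‖ = 1) (hψ₂ : ψ₂ = c • ψ₁)
    (η₁ η₂ : Matrix (Fin d) (Fin d) ℂ)
    (hη₁ : η₁.PosSemidef) (hη₁tr : η₁.trace = 1) (hη₁ψ : η₁ *ᵥ ψ₁ = 0)
    (hη₂ : η₂.PosSemidef) (hη₂tr : η₂.trace = 1) (hη₂ψ : η₂ *ᵥ ψ₂ = 0) :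
    ∃ ε₀ > (0 : ℝ), ∀ ε₁ ε₂ : ℝ, 0 < ε₁ → ε₁ < ε₀ → 0 < ε₂ → ε₂ < ε₀ →
      ((mixState ψ₁ η₁ ε₁ * mixState ψ₂ η₂ ε₂ +
            mixState ψ₂ η₂ ε₂ * mixState ψ₁ η₁ ε₁) *
          (mixState ψ₁ η₁ ε₁ * mixState ψ₂ η₂ ε₂ +
            mixState ψ₂ η₂ ε₂ * mixState ψ₁ η₁ ε₁)).trace.re
        ≤ ((mixState ψ₁ η₁ ε₁ * mixState ψ₂ η₂ ε₂ +
            mixState ψ₂ η₂ ε₂ * mixState ψ₁ η₁ ε₁).trace.re) ^ 2 :=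
  purity_criterion_fails_parallel_case_general ψ₁ ψ₂ hψ₁ c hc hψ₂ η₁ η₂ hη₁ hη₁ψ hη₂ hη₂ψ
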